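/- For every natural number $m$ and ordinal $\alpha$: every set mapping $F:[\aleph_{\alpha+m}]^m\to[\aleph_{\alpha+m}]^{<\aleph_\alpha}$ has a free set of size $m+1$. (Kuratowski–Sierpiński: $(\aleph_{\alpha+m}, m, \aleph_\alpha)\to m+1$.) -/

import Mathlib

open Cardinal

universe u

/-!
Induction on `m`. For `m = 0` a single point outside `F ∅` is free. For the step, close a subset
of size `ℵ_{α+m}` of the ground set `S` under `F` inside `S`; the closure `A` still has size
`ℵ_{α+m} < #S`, so some `b ∈ S` lies outside it. Then `y ↦ F (insert b y)` is a set mapping of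
order `m` on `A`, and inserting `b` into an `(m+1)`-element free set for it yields a free set for
`F`: the only `(m+1)`-subset avoiding `b` lies in `A`, whose image under `F` misses `b` by closure.
-/

lemma Cardinal.mk_finset_le_max (α : Type u) : #(Finset α) ≤ max ℵ₀ #α := by
  classical exact (mk_le_of_surjective List.toFinset_surjective).trans (mk_list_le_max α)

section SetMapping

variable {β : Type u}

/-- A set mapping of order `m` on `S` with values of size `< μ`, except that the values need not
lie in `S`. -/
def IsSetMapping (S : Set β) (m : ℕ) (μ : Cardinal.{u}) (F : Finset β → Set β) : Prop :=
  ∀ x : Finset β, ↑x ⊆ S → x.card = m → F x ∩ ↑x = ∅ ∧ #(F x) < μ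

def IsFree (F : Finset β → Set β) (m : ℕ) (X : Finset β) : Prop :=
  ∀ x ⊆ X, x.card = m → F x ∩ ↑X = ∅

def closureStep (S : Set β) (n : ℕ) (F : Finset β → Set β) (A : Set β) : Set β :=
  A ∪ ⋃ x : {x : Finset A // x.card = n}, F (x.1.map (Function.Embedding.subtype _)) ∩ S

variable {S A : Set β} {n : ℕ} {F : Finset β → Set β}

lemma subset_closureStep : A ⊆ closureStep S n F A :=
  Set.subset_union_left

lemma closureStep_subset (hAS : A ⊆ S) : closureStep S n F A ⊆ S :=
  Set.union_subset hAS (Set.iUnion_subset fun _ => Set.inter_subset_right)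

lemma inter_subset_closureStep {x : Finset β} (hxA : ↑x ⊆ A) (hx : x.card = n) :
    F x ∩ S ⊆ closureStep S n F A := by
  classical
  have hmap : (x.subtype (· ∈ A)).map (Function.Embedding.subtype _) = x :=
    Finset.subtype_map_of_mem fun a ha => hxA ha
  have hcard : (x.subtype (· ∈ A)).card = n := by
    rw [← Finset.card_map (Function.Embedding.subtype _), hmap, hx]
  exact Set.subset_union_of_subset_right (Set.subset_iUnion_of_subset ⟨_, hcard⟩ (by rw [hmap])) _

lemma mk_closureStep_le {κ : Cardinal.{u}} (hκ : ℵ₀ ≤ κ) (hAS : A ⊆ S) (hA : #A ≤ κ)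
    (hF : ∀ x : Finset β, ↑x ⊆ S → x.card = n → #(F x) ≤ κ) :
    #(closureStep S n F A) ≤ κ := by
  refine (mk_union_le _ _).trans (add_le_of_le hκ hA ((mk_iUnion_le _).trans ?_))
  refine mul_le_of_le hκ ?_ (ciSup_le' fun x => ?_)
  · exact (mk_subtype_le _).trans ((mk_finset_le_max _).trans (max_le hκ hA))
  · refine (mk_le_mk_of_subset Set.inter_subset_left).trans (hF _ ?_ ?_)
    · intro a ha
      obtain ⟨a', -, rfl⟩ := Finset.mem_map.1 ha
      exact hAS a'.2
    · exact (Finset.card_map _).trans x.2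

lemma exists_superset_closed {κ : Cardinal.{u}} (hκ : ℵ₀ ≤ κ) {B : Set β} (hBS : B ⊆ S)
    (hB : #B ≤ κ) (hF : ∀ x : Finset β, ↑x ⊆ S → x.card = n → #(F x) ≤ κ) :
    ∃ A, B ⊆ A ∧ A ⊆ S ∧ #A ≤ κ ∧ ∀ x : Finset β, ↑x ⊆ A → x.card = n → F x ∩ S ⊆ A := by
  set An : ℕ → Set β := fun k => (closureStep S n F)^[k] B
  have hsucc (k : ℕ) : An (k + 1) = closureStep S n F (An k) :=
    Function.iterate_succ_apply' _ _ _
  have hmono : Monotone An := monotone_nat_of_le_succ fun k => by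
    rw [hsucc]; exact subset_closureStep
  have hbound (k : ℕ) : An k ⊆ S ∧ #(An k) ≤ κ := by
    induction k with
    | zero => exact ⟨hBS, hB⟩
    | succ k ih => rw [hsucc]; exact ⟨closureStep_subset ih.1, mk_closureStep_le hκ ih.1 ih.2 hF⟩
  refine ⟨⋃ k, An k, Set.subset_iUnion An 0, Set.iUnion_subset fun k => (hbound k).1, ?_, ?_⟩
  · have hunion : #(⋃ k, An k) ≤ ℵ₀ * ⨆ k, #(An k) := by simpa using mk_iUnion_le_lift An
    exact hunion.trans (mul_le_of_le hκ hκ (ciSup_le' fun k => (hbound k).2))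
  · intro x hxA hx
    obtain ⟨k, hk⟩ := hmono.directed_le.exists_mem_subset_of_finset_subset_biUnion hxA
    exact (hsucc k ▸ inter_subset_closureStep hk hx).trans (Set.subset_iUnion An (k + 1))

lemma isFree_insert [DecidableEq β] {m : ℕ} {b : β} {X : Finset β}
    (hdisj : ∀ x ⊆ insert b X, x.card = m + 1 → F x ∩ ↑x = ∅)
    (hcard : X.card = m + 1) (hbF : b ∉ F X) (hX : IsFree (fun y => F (insert b y)) m X) :
    IsFree F (m + 1) (insert b X) := by
  intro x hx hxcard
  rw [Set.eq_empty_iff_forall_notMem]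
  rintro c ⟨hcF, hcX⟩
  have hcx : c ∉ x := fun hcx => (hdisj x hx hxcard).subset ⟨hcF, hcx⟩
  rw [Finset.coe_insert] at hcX
  by_cases hbx : b ∈ x
  · have hy : x.erase b ⊆ X := Finset.subset_insert_iff.1 hx
    have hycard : (x.erase b).card = m := by rw [Finset.card_erase_of_mem hbx, hxcard]; rfl
    rcases hcX with rfl | hcX
    · exact hcx hbx
    · have hfree : F (insert b (x.erase b)) ∩ ↑X = ∅ := hX _ hy hycard
      rw [Finset.insert_erase hbx] at hfree
      exact hfree.subset ⟨hcF, hcX⟩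
  · have hxX : x = X := Finset.eq_of_subset_of_card_le
      ((Finset.subset_insert_iff_of_notMem hbx).1 hx) (by rw [hcard, hxcard])
    subst hxX
    rcases hcX with rfl | hcX
    · exact hbF hcF
    · exact hcx hcX

lemma IsSetMapping.comp_insert [DecidableEq β] {m : ℕ} {μ : Cardinal.{u}}
    (hF : IsSetMapping S (m + 1) μ F) (hAS : A ⊆ S) {b : β} (hbS : b ∈ S) (hbA : b ∉ A) :
    IsSetMapping A m μ (fun y => F (insert b y)) := by
  intro y hyA hy
  have hby : b ∉ y := fun hby => hbA (hyA hby)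
  obtain ⟨hdisj, hsmall⟩ := hF (insert b y)
    (by rw [Finset.coe_insert]; exact Set.insert_subset hbS (hyA.trans hAS))
    (by rw [Finset.card_insert_of_notMem hby, hy])
  refine ⟨Set.subset_eq_empty ?_ hdisj, hsmall⟩
  exact Set.inter_subset_inter_right _ (Finset.coe_subset.2 (Finset.subset_insert b y))

theorem exists_isFree_card_eq_succ (m : ℕ) (α : Ordinal.{u}) {S : Set β}
    (hS : ℵ_ (α + m) ≤ #S) {F : Finset β → Set β} (hF : IsSetMapping S m (ℵ_ α) F) :
    ∃ X : Finset β, ↑X ⊆ S ∧ X.card = m + 1 ∧ IsFree F m X := by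
  classical
  induction m generalizing S F with
  | zero =>
    obtain ⟨-, hsmall⟩ := hF ∅ (by simp) rfl
    obtain ⟨b, hbS, hbF⟩ := sdiff_nonempty_of_mk_lt_mk (hsmall.trans_le (by simpa using hS))
    refine ⟨{b}, by simpa using hbS, rfl, fun x _ hx => ?_⟩
    rw [Finset.card_eq_zero.1 hx]
    simpa using hbF
  | succ m ih =>
    have hκS : ℵ_ (α + m) < #S :=
      (aleph_lt_aleph.2 (add_lt_add_right (by exact_mod_cast m.lt_succ_self) α)).trans_le hS
    obtain ⟨B, hBS, hB⟩ := le_mk_iff_exists_subset.1 hκS.le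
    obtain ⟨A, hBA, hAS, hA, hAclosed⟩ := exists_superset_closed (aleph0_le_aleph _) hBS hB.le
      fun x hxS hx => ((hF x hxS hx).2.trans_le (aleph_le_aleph.2 le_self_add)).le
    obtain ⟨b, hbS, hbA⟩ := sdiff_nonempty_of_mk_lt_mk (hA.trans_lt hκS)
    obtain ⟨X, hXA, hXcard, hXfree⟩ :=
      ih (hB.ge.trans (mk_le_mk_of_subset hBA)) (hF.comp_insert hAS hbS hbA)
    have hXS : ↑(insert b X) ⊆ S := by
      rw [Finset.coe_insert]; exact Set.insert_subset hbS (hXA.trans hAS)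
    refine ⟨insert b X, hXS, ?_, isFree_insert ?_ hXcard ?_ hXfree⟩
    · rw [Finset.card_insert_of_notMem fun hbX => hbA (hXA hbX), hXcard]
    · exact fun x hx hcard => (hF x ((Finset.coe_subset.2 hx).trans hXS) hcard).1
    · exact fun hbF => hbA (hAclosed X hXA hXcard ⟨hbF, hbS⟩)

end SetMapping

/-- Kuratowski–Sierpiński: `(ℵ_{α+m}, m, ℵ_α) → m+1`. Every set mapping
`F : [ℵ_{α+m}]^m → [ℵ_{α+m}]^{<ℵ_α}` has a free set of size `m+1`. -/
theorem stmt9 (m : ℕ) (α : Ordinal.{u}) :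
    ∀ F : Finset Ordinal → Set Ordinal,
      (∀ x : Finset Ordinal, (∀ a ∈ x, a < (Cardinal.aleph (α + m)).ord) →
        x.card = m →
        F x ∩ ↑x = ∅ ∧ F x ⊆ Set.Iio (Cardinal.aleph (α + m)).ord ∧
          Cardinal.mk (F x) < Cardinal.lift.{u+1} (Cardinal.aleph α)) →
      ∃ X : Finset Ordinal, (∀ a ∈ X, a < (Cardinal.aleph (α + m)).ord) ∧
        X.card = m + 1 ∧ ∀ x ⊆ X, x.card = m → F x ∩ ↑X = ∅ := by
  intro F hF
  have hS : ℵ_ (Ordinal.lift.{u+1} α + m) ≤ #(Set.Iio (ℵ_ (α + m)).ord) := by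
    rw [Cardinal.mk_Iio_ordinal, card_ord, lift_aleph, Ordinal.lift_add, Ordinal.lift_natCast]
  have hFS : IsSetMapping (Set.Iio (ℵ_ (α + m)).ord) m (ℵ_ (Ordinal.lift.{u+1} α)) F :=
    fun x hx hcard => by
      obtain ⟨hdisj, -, hsmall⟩ := hF x (fun a ha => hx ha) hcard
      exact ⟨hdisj, by rwa [← lift_aleph]⟩
  obtain ⟨X, hXS, hXcard, hXfree⟩ := exists_isFree_card_eq_succ m _ hS hFS
  exact ⟨X, fun a ha => hXS ha, hXcard, hXfree⟩
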